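/- Let d ≥ 1 and let g : ℝ^d → ℝ be twice continuously differentiable with ∇g Lipschitz continuous on ℝ^d with constant L_g > 0 (so in particular g is L_g-weakly convex). Suppose there exist R ≥ 0 and μ > 0 such that ⟨∇²g(z) v, v⟩ ≥ μ‖v‖² for all v ∈ ℝ^d whenever ‖z‖ ≥ R. Then there exists R₀ ≥ 0 such that for every γ ∈ (0, 1/(2L_g)] and every x ∈ ℝ^d with ‖x‖ ≥ R₀, the Moreau envelope g^γ is twice differentiable at x and ⟨∇²g^γ(x) v, v⟩ ≥ (μ/(1 + γμ))‖v‖² for all v ∈ ℝ^d; that is, g^γ is μ/(1 + γμ)-strongly convex outside the ball B(0, R₀). -/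

import Mathlib

open scoped RealInnerProductSpace

/-!
The Moreau envelope is computed through the resolvent `p = (I + γ∇g)⁻¹`: for `γ L_g ≤ 1/2`
the equation `p + γ∇g(p) = w` has a unique solution (Banach fixed point), the descent lemma shows
that `p(w)` minimises `y ↦ ‖w - y‖²/(2γ) + g(y)`, and comparing the envelope at `z` and `z + v`
with the competitors `p(z + v)` and `p(z)` gives `∇g^γ = (I - p)/γ = ∇g ∘ p`.
Differentiating `p` by the inverse function rule, `∇²g^γ(x) = A (I + γA)⁻¹` with `A = ∇²g(p(x))`.
Since `‖x‖ ≤ 3/2 ‖p(x)‖ + ‖∇g(0)‖/(2L_g)`, far from the origin `p(x)` is far too, so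
`⟪Au, u⟫ ≥ μ‖u‖²`, and `λ ↦ λ/(1 + γλ)` is increasing.
-/

open Filter Topology Asymptotics InnerProductSpace

section

variable {E : Type*} [NormedAddCommGroup E]

noncomputable def moreauEnvelope (g : E → ℝ) (γ : ℝ) (x : E) : ℝ :=
  ⨅ y, 1 / (2 * γ) * ‖x - y‖ ^ 2 + g y

theorem moreauEnvelope_eq_of_forall_le {g : E → ℝ} {γ : ℝ} {x q : E}
    (hq : ∀ y, 1 / (2 * γ) * ‖x - q‖ ^ 2 + g q ≤ 1 / (2 * γ) * ‖x - y‖ ^ 2 + g y) :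
    moreauEnvelope g γ x = 1 / (2 * γ) * ‖x - q‖ ^ 2 + g q :=
  le_antisymm (ciInf_le ⟨_, Set.forall_mem_range.2 hq⟩ q) (le_ciInf hq)

variable [InnerProductSpace ℝ E]

theorem abs_moreauEnvelope_add_sub_sub_inner_le {g : E → ℝ} {γ : ℝ} (hγ : 0 < γ) {p : E → E}
    (hp : ∀ w y, 1 / (2 * γ) * ‖w - p w‖ ^ 2 + g (p w) ≤ 1 / (2 * γ) * ‖w - y‖ ^ 2 + g y)
    (z v : E) :
    |moreauEnvelope g γ (z + v) - moreauEnvelope g γ z - ⟪γ⁻¹ • (z - p z), v⟫| ≤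
      ‖γ⁻¹ • (z + v - p (z + v)) - γ⁻¹ • (z - p z)‖ * ‖v‖ + 1 / (2 * γ) * ‖v‖ ^ 2 := by
  have henv : ∀ w, moreauEnvelope g γ w = 1 / (2 * γ) * ‖w - p w‖ ^ 2 + g (p w) :=
    fun w => moreauEnvelope_eq_of_forall_le (hp w)
  have hexpand : ∀ w u q : E, 1 / (2 * γ) * ‖w + u - q‖ ^ 2 =
      1 / (2 * γ) * ‖w - q‖ ^ 2 + ⟪γ⁻¹ • (w - q), u⟫ + 1 / (2 * γ) * ‖u‖ ^ 2 := by
    intro w u q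
    rw [add_sub_right_comm, norm_add_sq_real, real_inner_smul_left]
    field_simp
  have hupper := hp (z + v) (p z)
  rw [← henv, hexpand] at hupper
  have hlower := hp z (p (z + v))
  rw [← henv] at hlower
  have hexpand' := hexpand (z + v) (-v) (p (z + v))
  rw [add_neg_cancel_right, norm_neg, inner_neg_right] at hexpand'
  have hcs := neg_le_of_abs_le
    (abs_real_inner_le_norm (γ⁻¹ • (z + v - p (z + v)) - γ⁻¹ • (z - p z)) v)
  rw [inner_sub_left] at hcs
  have hprod := mul_nonneg (norm_nonneg (γ⁻¹ • (z + v - p (z + v)) - γ⁻¹ • (z - p z)))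
    (norm_nonneg v)
  rw [abs_le]
  constructor <;> linarith [henv z, henv (z + v)]

def IsResolvent (γ : ℝ) (g' p : E → E) : Prop :=
  ∀ w, p w + γ • g' (p w) = w

namespace IsResolvent

variable {L γ : ℝ} {g' p : E → E}

theorem norm_le (hp : IsResolvent γ g' p) (hγ : 0 ≤ γ)
    (hL : ∀ x y, ‖g' x - g' y‖ ≤ L * ‖x - y‖) (w : E) :
    ‖w‖ ≤ (1 + γ * L) * ‖p w‖ + γ * ‖g' 0‖ := by
  have hg' : ‖g' (p w)‖ ≤ L * ‖p w‖ + ‖g' 0‖ := by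
    have := hL (p w) 0
    rw [sub_zero] at this
    linarith [norm_le_norm_sub_add (g' (p w)) (g' 0)]
  calc ‖w‖ = ‖p w + γ • g' (p w)‖ := by rw [hp w]
    _ ≤ ‖p w‖ + γ * ‖g' (p w)‖ := by
        simpa only [norm_smul, Real.norm_of_nonneg hγ] using norm_add_le (p w) (γ • g' (p w))
    _ ≤ (1 + γ * L) * ‖p w‖ + γ * ‖g' 0‖ := by nlinarith [mul_le_mul_of_nonneg_left hg' hγ]

theorem one_sub_mul_norm_sub_le (hp : IsResolvent γ g' p) (hγ : 0 ≤ γ)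
    (hL : ∀ x y, ‖g' x - g' y‖ ≤ L * ‖x - y‖) (w w' : E) :
    (1 - γ * L) * ‖p w - p w'‖ ≤ ‖w - w'‖ := by
  have hdiff : p w - p w' = (w - w') - γ • (g' (p w) - g' (p w')) := by
    calc p w - p w' = (p w + γ • g' (p w)) - (p w' + γ • g' (p w'))
          - γ • (g' (p w) - g' (p w')) := by rw [smul_sub]; abel
      _ = _ := by rw [hp, hp]
  have hle : ‖p w - p w'‖ ≤ ‖w - w'‖ + γ * (L * ‖p w - p w'‖) := by
    calc ‖p w - p w'‖ ≤ ‖w - w'‖ + γ * ‖g' (p w) - g' (p w')‖ := by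
          rw [hdiff]
          simpa only [norm_smul, Real.norm_of_nonneg hγ] using
            norm_sub_le (w - w') (γ • (g' (p w) - g' (p w')))
      _ ≤ ‖w - w'‖ + γ * (L * ‖p w - p w'‖) := by gcongr; exact hL _ _
  linarith

theorem lipschitzWith (hp : IsResolvent γ g' p) (hγ : 0 ≤ γ) (hγL : γ * L < 1)
    (hL : ∀ x y, ‖g' x - g' y‖ ≤ L * ‖x - y‖) :
    LipschitzWith (1 - γ * L)⁻¹.toNNReal p := by
  refine LipschitzWith.of_dist_le_mul fun w w' => ?_
  have hpos : 0 < 1 - γ * L := by linarith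
  rw [dist_eq_norm, dist_eq_norm, Real.coe_toNNReal _ (inv_nonneg.2 hpos.le), inv_mul_eq_div,
    le_div_iff₀ hpos, mul_comm]
  exact hp.one_sub_mul_norm_sub_le hγ hL w w'

theorem hasFDerivAt (hp : IsResolvent γ g' p) {x : E}
    (hpx : ContinuousAt p x) {A : E →L[ℝ] E} (hA : HasFDerivAt g' A (p x)) {T : E ≃L[ℝ] E}
    (hT : (T : E →L[ℝ] E) = ContinuousLinearMap.id ℝ E + γ • A) :
    HasFDerivAt p (T.symm : E →L[ℝ] E) x :=
  HasFDerivAt.of_local_left_inverse (f := fun y => y + γ • g' y) hpx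
    (hT ▸ (hasFDerivAt_id _).add (hA.const_smul γ)) (Eventually.of_forall hp)

end IsResolvent

theorem div_one_add_mul_mul_norm_sq_le_inner {μ γ : ℝ} (hμ : 0 ≤ μ) (hγ : 0 ≤ γ) {a u : E}
    (h : μ * ‖u‖ ^ 2 ≤ ⟪a, u⟫) :
    μ / (1 + γ * μ) * ‖u + γ • a‖ ^ 2 ≤ ⟪a, u + γ • a⟫ := by
  have hcs : ⟪a, u⟫ ≤ ‖a‖ * ‖u‖ := real_inner_le_norm a u
  have hnorm : μ * ‖u‖ ≤ ‖a‖ := by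
    rcases (norm_nonneg u).eq_or_lt with hu | hu
    · rw [← hu, mul_zero]; exact norm_nonneg a
    · nlinarith
  have hsq : μ * ⟪a, u⟫ ≤ ‖a‖ ^ 2 := by nlinarith [norm_nonneg a]
  rw [div_mul_eq_mul_div, div_le_iff₀ (by positivity), norm_add_sq_real, inner_add_right,
    inner_smul_right, inner_smul_right, real_inner_self_eq_norm_sq, norm_smul,
    Real.norm_of_nonneg hγ, real_inner_comm]
  nlinarith [mul_le_mul_of_nonneg_left hsq hγ]

theorem div_one_add_mul_mul_norm_sq_le_inner_comp_symm {μ γ : ℝ} (hμ : 0 ≤ μ) (hγ : 0 ≤ γ)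
    {A : E →L[ℝ] E} (hA : ∀ v, μ * ‖v‖ ^ 2 ≤ ⟪A v, v⟫) {T : E ≃L[ℝ] E}
    (hT : (T : E →L[ℝ] E) = ContinuousLinearMap.id ℝ E + γ • A) (v : E) :
    μ / (1 + γ * μ) * ‖v‖ ^ 2 ≤ ⟪A (T.symm v), v⟫ := by
  obtain ⟨u, rfl⟩ := T.surjective v
  have hTu : T u = u + γ • A u := by rw [← ContinuousLinearEquiv.coe_coe, hT]; rfl
  rw [T.symm_apply_apply, hTu]
  exact div_one_add_mul_mul_norm_sq_le_inner hμ hγ (hA _)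

variable [CompleteSpace E]

theorem quadratic_lower_bound_of_lipschitz_gradient {L : ℝ} {g : E → ℝ} {g' : E → E}
    (hg : ∀ x, HasGradientAt g (g' x) x) (hL : ∀ x y, ‖g' x - g' y‖ ≤ L * ‖x - y‖) (x y : E) :
    g x + ⟪g' x, y - x⟫ - L / 2 * ‖y - x‖ ^ 2 ≤ g y := by
  set d := y - x
  let ψ : ℝ → ℝ := fun t => g (x + t • d) - t * ⟪g' x, d⟫ + L / 2 * t ^ 2 * ‖d‖ ^ 2
  have hψ : ∀ t, HasDerivAt ψ (⟪g' (x + t • d) - g' x, d⟫ + L * t * ‖d‖ ^ 2) t := by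
    intro t
    have hline : HasDerivAt (fun t : ℝ => x + t • d) d t := by
      simpa using ((hasDerivAt_id t).smul_const d).const_add x
    have hcomp : HasDerivAt (fun t : ℝ => g (x + t • d)) ⟪g' (x + t • d), d⟫ t := by
      have h := (hg (x + t • d)).hasFDerivAt.comp_hasDerivAt t hline
      exact h
    refine ((hcomp.sub ((hasDerivAt_id t).mul_const ⟪g' x, d⟫)).add
      (((hasDerivAt_pow 2 t).const_mul (L / 2)).mul_const (‖d‖ ^ 2))).congr_deriv ?_
    rw [inner_sub_left]
    push_cast
    ring
  have hmono : MonotoneOn ψ (Set.Ici 0) := by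
    refine monotoneOn_of_hasDerivWithinAt_nonneg (convex_Ici 0)
      (fun t _ => (hψ t).continuousAt.continuousWithinAt) (fun t _ => (hψ t).hasDerivWithinAt)
      fun t ht => ?_
    rw [interior_Ici, Set.mem_Ioi] at ht
    have hcs := abs_le.1 ((abs_real_inner_le_norm (g' (x + t • d) - g' x) d).trans
      (mul_le_mul_of_nonneg_right (hL _ _) (norm_nonneg d)))
    rw [add_sub_cancel_left, norm_smul, Real.norm_of_nonneg ht.le] at hcs
    nlinarith [hcs.1]
  have hend : ψ 0 ≤ ψ 1 := hmono Set.self_mem_Ici (Set.mem_Ici.2 zero_le_one) zero_le_one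
  simp only [ψ, d, zero_smul, add_zero, one_smul, add_sub_cancel] at hend
  linarith

theorem exists_isResolvent {L γ : ℝ} (hγ : 0 ≤ γ) (hγL : γ * L < 1) {g' : E → E}
    (hL : ∀ x y, ‖g' x - g' y‖ ≤ L * ‖x - y‖) : ∃ p : E → E, IsResolvent γ g' p := by
  have hcontr : ∀ w : E, ContractingWith (γ * L).toNNReal (fun y => w - γ • g' y) := by
    refine fun w => ⟨by simpa using hγL, LipschitzWith.of_dist_le_mul fun x y => ?_⟩
    rw [dist_eq_norm, dist_eq_norm, sub_sub_sub_cancel_left, ← smul_sub, norm_smul,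
      Real.norm_of_nonneg hγ]
    calc γ * ‖g' y - g' x‖ ≤ γ * (L * ‖y - x‖) := by gcongr; exact hL y x
      _ = γ * L * ‖x - y‖ := by rw [norm_sub_rev]; ring
      _ ≤ (γ * L).toNNReal * ‖x - y‖ := by gcongr; exact Real.le_coe_toNNReal _
  refine ⟨fun w => ContractingWith.fixedPoint _ (hcontr w), fun w => ?_⟩
  exact eq_sub_iff_add_eq.1 (ContractingWith.fixedPoint_isFixedPt (hcontr w)).symm

theorem IsResolvent.isMinimizer {L γ : ℝ} {g : E → ℝ} {g' p : E → E}
    (hp : IsResolvent γ g' p) (hγ : 0 < γ) (hγL : γ * L ≤ 1) (hg : ∀ x, HasGradientAt g (g' x) x)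
    (hL : ∀ x y, ‖g' x - g' y‖ ≤ L * ‖x - y‖) (w y : E) :
    1 / (2 * γ) * ‖w - p w‖ ^ 2 + g (p w) ≤ 1 / (2 * γ) * ‖w - y‖ ^ 2 + g y := by
  set q := p w
  have hwq : w - q = γ • g' q := by rw [← hp w, add_sub_cancel_left]
  have hexpand : ‖w - y‖ ^ 2 = ‖w - q‖ ^ 2 - 2 * γ * ⟪g' q, y - q⟫ + ‖y - q‖ ^ 2 := by
    rw [show w - y = (w - q) - (y - q) by abel, norm_sub_sq_real, hwq, real_inner_smul_left]
    ring
  have hdescent := quadratic_lower_bound_of_lipschitz_gradient hg hL q y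
  have hcoef : 0 ≤ 1 / (2 * γ) - L / 2 := by
    rw [sub_nonneg, div_le_div_iff₀ two_pos (by positivity)]
    nlinarith
  rw [hexpand]
  field_simp
  nlinarith [mul_nonneg hcoef (sq_nonneg ‖y - q‖)]

theorem hasGradientAt_moreauEnvelope {g : E → ℝ} {γ : ℝ} (hγ : 0 < γ) {p : E → E}
    (hp : ∀ w y, 1 / (2 * γ) * ‖w - p w‖ ^ 2 + g (p w) ≤ 1 / (2 * γ) * ‖w - y‖ ^ 2 + g y)
    {z : E} (hpz : ContinuousAt p z) :
    HasGradientAt (moreauEnvelope g γ) (γ⁻¹ • (z - p z)) z := by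
  have hGz : Tendsto (fun v => ‖γ⁻¹ • (z + v - p (z + v)) - γ⁻¹ • (z - p z)‖) (𝓝 0) (𝓝 0) := by
    have hG : ContinuousAt (fun w => γ⁻¹ • (w - p w)) z := (continuousAt_id.sub hpz).const_smul _
    exact tendsto_iff_norm_sub_tendsto_zero.1
      (hG.tendsto.comp ((continuous_const_add z).tendsto' 0 z (add_zero z)))
  rw [hasGradientAt_iff_isLittleO_nhds_zero]
  refine (isBigO_of_le _ fun v => (abs_moreauEnvelope_add_sub_sub_inner_le hγ hp z v).trans
    (Real.le_norm_self _)).trans_isLittleO ?_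
  refine IsLittleO.add ?_ ((isLittleO_norm_pow_id one_lt_two).const_mul_left _)
  refine isLittleO_norm_right.1 ?_
  simpa using ((isLittleO_one_iff ℝ).2 hGz).mul_isBigO (isBigO_refl (fun v : E => ‖v‖) _)

theorem exists_continuousLinearEquiv_id_add_smul {γ : ℝ} (hγ : 0 ≤ γ) {A : E →L[ℝ] E}
    (hA : ∀ v, 0 ≤ ⟪A v, v⟫) :
    ∃ T : E ≃L[ℝ] E, (T : E →L[ℝ] E) = ContinuousLinearMap.id ℝ E + γ • A := by
  set S := ContinuousLinearMap.id ℝ E + γ • A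
  have hS : ∀ v, S v = v + γ • A v := fun v => rfl
  set B : E →L[ℝ] E →L[ℝ] ℝ := (innerSL ℝ).comp S
  have hB : ∀ v w, B v w = ⟪S v, w⟫ := fun v w => rfl
  have hcoercive : IsCoercive B := by
    refine ⟨1, one_pos, fun v => ?_⟩
    rw [hB, hS, one_mul, ← sq, inner_add_left, real_inner_smul_left,
      real_inner_self_eq_norm_sq]
    nlinarith [hA v]
  refine ⟨hcoercive.continuousLinearEquivOfBilin, ContinuousLinearMap.ext fun v => ?_⟩
  exact ext_inner_right ℝ fun w => by simp [hB]

end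

theorem moreau_envelope_strongly_convex_at_infinity_general (d : ℕ)
    (Lg μ R : ℝ) (hLg : 0 < Lg) (hμ : 0 < μ)
    (g : EuclideanSpace ℝ (Fin d) → ℝ)
    (g' : EuclideanSpace ℝ (Fin d) → EuclideanSpace ℝ (Fin d))
    (g'' : EuclideanSpace ℝ (Fin d) →
      (EuclideanSpace ℝ (Fin d) →L[ℝ] EuclideanSpace ℝ (Fin d)))
    (hg' : ∀ x, HasGradientAt g (g' x) x)
    (hg'' : ∀ x, HasFDerivAt g' (g'' x) x)
    (hlip : ∀ x y : EuclideanSpace ℝ (Fin d), ‖g' x - g' y‖ ≤ Lg * ‖x - y‖)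
    (hconvinf : ∀ z : EuclideanSpace ℝ (Fin d), R ≤ ‖z‖ →
      ∀ v : EuclideanSpace ℝ (Fin d), μ * ‖v‖ ^ 2 ≤ ⟪g'' z v, v⟫) :
    ∃ R₀ : ℝ, 0 ≤ R₀ ∧
      ∀ γ : ℝ, 0 < γ → γ ≤ 1 / (2 * Lg) →
        ∃ G : EuclideanSpace ℝ (Fin d) → EuclideanSpace ℝ (Fin d),
          (∀ z : EuclideanSpace ℝ (Fin d),
            HasGradientAt
              (fun w : EuclideanSpace ℝ (Fin d) =>
                ⨅ y : EuclideanSpace ℝ (Fin d), 1 / (2 * γ) * ‖w - y‖ ^ 2 + g y)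
              (G z) z) ∧
          ∀ x : EuclideanSpace ℝ (Fin d), R₀ ≤ ‖x‖ →
            ∃ H : EuclideanSpace ℝ (Fin d) →L[ℝ] EuclideanSpace ℝ (Fin d),
              HasFDerivAt G H x ∧
              ∀ v : EuclideanSpace ℝ (Fin d),
                μ / (1 + γ * μ) * ‖v‖ ^ 2 ≤ ⟪H v, v⟫ := by
  refine ⟨3 / 2 * max R 0 + ‖g' 0‖ / (2 * Lg), by positivity, fun γ hγ hγLg => ?_⟩
  have hγL : γ * Lg ≤ 1 / 2 := by rw [le_div_iff₀ (by positivity)] at hγLg; linarith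
  obtain ⟨p, hp⟩ := exists_isResolvent hγ.le (by linarith) hlip
  have hpc : Continuous p := (hp.lipschitzWith hγ.le (by linarith) hlip).continuous
  refine ⟨fun w => g' (p w), fun z => ?_, fun x hx => ?_⟩
  · have hgrad : γ⁻¹ • (z - p z) = g' (p z) := by
      rw [← eq_sub_of_add_eq' (hp z), inv_smul_smul₀ hγ.ne']
    show HasGradientAt (moreauEnvelope g γ) (g' (p z)) z
    rw [← hgrad]
    exact hasGradientAt_moreauEnvelope hγ
      (hp.isMinimizer hγ (by linarith) hg' hlip) hpc.continuousAt
  · have hpx : R ≤ ‖p x‖ := by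
      have hγg := mul_le_mul_of_nonneg_right hγLg (norm_nonneg (g' 0))
      rw [one_div_mul_eq_div] at hγg
      nlinarith [hp.norm_le hγ.le hlip x, le_max_left R 0,
        mul_le_mul_of_nonneg_right hγL (norm_nonneg (p x))]
    obtain ⟨T, hT⟩ := exists_continuousLinearEquiv_id_add_smul hγ.le (A := g'' (p x))
      fun v => (mul_nonneg hμ.le (sq_nonneg _)).trans (hconvinf _ hpx v)
    have hpB := hp.hasFDerivAt hpc.continuousAt (hg'' (p x)) hT
    refine ⟨(g'' (p x)).comp (T.symm : _ →L[ℝ] _), (hg'' (p x)).comp x hpB, fun v => ?_⟩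
    exact div_one_add_mul_mul_norm_sq_le_inner_comp_symm hμ.le hγ.le (hconvinf _ hpx) hT v

/-- If `g` is C² with `∇g` `L_g`-Lipschitz and `⟨∇²g(z)v, v⟩ ≥ μ‖v‖²`
whenever `‖z‖ ≥ R`, then there exists `R₀ ≥ 0` such that for every `γ ∈ (0, 1/(2L_g)]`
the Moreau envelope `g^γ` is twice differentiable outside `B(0, R₀)` with
`⟨∇²g^γ(x)v, v⟩ ≥ (μ/(1 + γμ))‖v‖²` there; i.e., `g^γ` is `μ/(1+γμ)`-strongly convex
outside `B(0, R₀)`. -/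
theorem moreau_envelope_strongly_convex_at_infinity (d : ℕ) (hd : 1 ≤ d)
    (Lg μ R : ℝ) (hLg : 0 < Lg) (hμ : 0 < μ) (hR : 0 ≤ R)
    (g : EuclideanSpace ℝ (Fin d) → ℝ)
    (g' : EuclideanSpace ℝ (Fin d) → EuclideanSpace ℝ (Fin d))
    (g'' : EuclideanSpace ℝ (Fin d) →
      (EuclideanSpace ℝ (Fin d) →L[ℝ] EuclideanSpace ℝ (Fin d)))
    (hg' : ∀ x, HasGradientAt g (g' x) x)
    (hg'' : ∀ x, HasFDerivAt g' (g'' x) x)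
    (hg''cont : Continuous g'')
    (hlip : ∀ x y : EuclideanSpace ℝ (Fin d), ‖g' x - g' y‖ ≤ Lg * ‖x - y‖)
    (hconvinf : ∀ z : EuclideanSpace ℝ (Fin d), R ≤ ‖z‖ →
      ∀ v : EuclideanSpace ℝ (Fin d), μ * ‖v‖ ^ 2 ≤ ⟪g'' z v, v⟫) :
    ∃ R₀ : ℝ, 0 ≤ R₀ ∧
      ∀ γ : ℝ, 0 < γ → γ ≤ 1 / (2 * Lg) →
        ∃ G : EuclideanSpace ℝ (Fin d) → EuclideanSpace ℝ (Fin d),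
          (∀ z : EuclideanSpace ℝ (Fin d),
            HasGradientAt
              (fun w : EuclideanSpace ℝ (Fin d) =>
                ⨅ y : EuclideanSpace ℝ (Fin d), 1 / (2 * γ) * ‖w - y‖ ^ 2 + g y)
              (G z) z) ∧
          ∀ x : EuclideanSpace ℝ (Fin d), R₀ ≤ ‖x‖ →
            ∃ H : EuclideanSpace ℝ (Fin d) →L[ℝ] EuclideanSpace ℝ (Fin d),
              HasFDerivAt G H x ∧
              ∀ v : EuclideanSpace ℝ (Fin d),
                μ / (1 + γ * μ) * ‖v‖ ^ 2 ≤ ⟪H v, v⟫ :=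
  moreau_envelope_strongly_convex_at_infinity_general d Lg μ R hLg hμ g g' g'' hg' hg'' hlip
    hconvinf
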